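/- Let w_1, …, w_n > 0 with Σ_i w_i = 1, and let M be the move-ahead-1 (MA1) transition matrix on permutations of {1,…,n}: M(x,y) = w_{x_r} if y is obtained from x by transposing the entries in positions r−1 and r for some 2 ≤ r ≤ n; M(x,x) = w_{x_1}; and M(x,y) = 0 otherwise. Let π(x) := z^{−1} ∏_{i=1}^n w_{x_i}^{n−i}, where z is the normalizing constant making Σ_x π(x) = 1. Then π(x)·M(x,y) = π(y)·M(y,x) for all permutations x and y; that is, M is reversible with respect to π, and hence π is a stationary distribution of M. -/

import Mathlib

open Finset

/-- The Hendricks stationary weight `∏_{i=1}^n w_{x_i}^{n-i}` (0-based exponent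
`n - 1 - i`), where `x i` is the entry in position `i`. -/
noncomputable def wProd (n : ℕ) (w : Fin n → ℝ) (x : Equiv.Perm (Fin n)) : ℝ :=
  ∏ i : Fin n, w (x i) ^ (n - 1 - (i : ℕ))

/-- The move-ahead-1 (MA1) transition matrix: `M(x,y) = w_{x_r}` if `y` is obtained
from `x` by transposing the entries in (0-based) positions `r-1` and `r` for some
`1 ≤ r ≤ n-1`; `M(x,x) = w_{x_1}` (the front record); `M(x,y) = 0` otherwise. -/
noncomputable def MA1 (n : ℕ) (hn : 0 < n) (w : Fin n → ℝ) :
    Matrix (Equiv.Perm (Fin n)) (Equiv.Perm (Fin n)) ℝ :=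
  Matrix.of fun x y =>
    if x = y then w (x ⟨0, hn⟩)
    else
      ∑ r : Fin n,
        if 1 ≤ (r : ℕ) ∧
            y = x *
              Equiv.swap (⟨(r : ℕ) - 1, Nat.lt_of_le_of_lt (Nat.sub_le _ _) r.isLt⟩ : Fin n) r
        then w (x r)
        else 0

/-!
A move-ahead-1 step from `x` swaps the records in positions `r - 1` and `r` with probability
`w (x r)`, and the reverse step has probability `w (x (r - 1))`. The swap raises the exponent of
`w (x r)` in `wProd` by one and lowers that of `w (x (r - 1))` by one, so
`wProd x * w (x r) = wProd y * w (x (r - 1))`: detailed balance holds. Stationarity follows by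
summing, since every row of `MA1` sums to `∑ i, w i = 1`.
-/

theorem prod_pow_mul_eq_prod_pow_add_ite {ι M : Type*} [Fintype ι] [DecidableEq ι] [CommMonoid M]
    (f : ι → M) (e : ι → ℕ) (b : ι) :
    (∏ i, f i ^ e i) * f b = ∏ i, f i ^ (e i + if i = b then 1 else 0) := by
  simp only [pow_add, Finset.prod_mul_distrib, pow_ite, pow_one, pow_zero, Fintype.prod_ite_eq']

theorem prod_pow_comp_swap_mul {ι M : Type*} [Fintype ι] [DecidableEq ι] [CommMonoid M]
    (f : ι → M) (e : ι → ℕ) {a b : ι} (hab : a ≠ b) (he : e a = e b + 1) :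
    (∏ i, f i ^ e (Equiv.swap a b i)) * f a = (∏ i, f i ^ e i) * f b := by
  rw [prod_pow_mul_eq_prod_pow_add_ite (fun i => f i) (fun i => e (Equiv.swap a b i)),
    prod_pow_mul_eq_prod_pow_add_ite]
  refine Finset.prod_congr rfl fun i _ => congrArg (f i ^ ·) ?_
  rcases eq_or_ne i a with rfl | hia
  · simp [hab, he]
  rcases eq_or_ne i b with rfl | hib
  · simp [hab.symm, he]
  · simp [Equiv.swap_apply_of_ne_of_ne hia hib, hia, hib]

def predPos {n : ℕ} (r : Fin n) : Fin n :=
  ⟨(r : ℕ) - 1, Nat.lt_of_le_of_lt (Nat.sub_le _ _) r.isLt⟩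

/-- Since `predPos 0 = 0`, `moveAhead 0 = 1`: requesting the front record changes nothing, so
`MA1_apply` covers the diagonal entry of `MA1` as well. -/
def moveAhead {n : ℕ} (r : Fin n) : Equiv.Perm (Fin n) :=
  Equiv.swap (predPos r) r

theorem predPos_eq_self_iff {n : ℕ} (r : Fin n) : predPos r = r ↔ (r : ℕ) = 0 := by
  rw [predPos, Fin.ext_iff]
  dsimp only
  omega

theorem moveAhead_eq_one_iff {n : ℕ} (r : Fin n) : moveAhead r = 1 ↔ (r : ℕ) = 0 := by
  rw [moveAhead, Equiv.swap_eq_one_iff, predPos_eq_self_iff]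

theorem eq_mul_moveAhead_comm {n : ℕ} {x y : Equiv.Perm (Fin n)} {r : Fin n} :
    y = x * moveAhead r ↔ x = y * moveAhead r := by
  constructor <;> rintro rfl <;> simp [moveAhead, mul_assoc]

theorem MA1_apply (n : ℕ) (hn : 0 < n) (w : Fin n → ℝ) (x y : Equiv.Perm (Fin n)) :
    MA1 n hn w x y = ∑ r, if y = x * moveAhead r then w (x r) else 0 := by
  rcases eq_or_ne x y with rfl | hxy
  · have hzero (r : Fin n) : (r : ℕ) = 0 ↔ r = ⟨0, hn⟩ := by rw [Fin.ext_iff]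
    simp only [MA1, Matrix.of_apply, if_true, left_eq_mul, moveAhead_eq_one_iff, hzero,
      Fintype.sum_ite_eq']
  · simp only [MA1, Matrix.of_apply, if_neg hxy]
    refine Finset.sum_congr rfl fun r _ => if_congr ⟨And.right, fun h => ⟨?_, h⟩⟩ rfl rfl
    refine Nat.one_le_iff_ne_zero.2 fun hr => hxy ?_
    rw [h, (moveAhead_eq_one_iff r).2 hr, mul_one]

theorem wProd_mul_moveAhead_mul (n : ℕ) (w : Fin n → ℝ) (x : Equiv.Perm (Fin n)) (r : Fin n) :
    wProd n w (x * moveAhead r) * w (x (predPos r)) = wProd n w x * w (x r) := by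
  by_cases hr : (r : ℕ) = 0
  · rw [(predPos_eq_self_iff r).2 hr, (moveAhead_eq_one_iff r).2 hr, mul_one]
  have hwProd : wProd n w (x * moveAhead r) =
      ∏ i, w (x i) ^ (n - 1 - (moveAhead r i : ℕ)) := by
    rw [wProd, ← Equiv.prod_comp (moveAhead r)]
    simp [moveAhead]
  rw [hwProd, wProd]
  refine prod_pow_comp_swap_mul (fun i => w (x i)) (fun i => n - 1 - (i : ℕ)) ?_ ?_
  · exact mt (predPos_eq_self_iff r).1 hr
  · have := r.isLt
    simp only [predPos]
    omega

theorem wProd_mul_MA1_symm (n : ℕ) (hn : 0 < n) (w : Fin n → ℝ) (x y : Equiv.Perm (Fin n)) :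
    wProd n w x * MA1 n hn w x y = wProd n w y * MA1 n hn w y x := by
  simp only [MA1_apply, Finset.mul_sum]
  refine Finset.sum_congr rfl fun r _ => ?_
  by_cases h : y = x * moveAhead r
  · rw [if_pos h, if_pos (eq_mul_moveAhead_comm.1 h), h, ← wProd_mul_moveAhead_mul]
    simp [moveAhead]
  · rw [if_neg h, if_neg (mt eq_mul_moveAhead_comm.2 h), mul_zero, mul_zero]

theorem sum_MA1_row (n : ℕ) (hn : 0 < n) (w : Fin n → ℝ) (x : Equiv.Perm (Fin n)) :
    ∑ y, MA1 n hn w x y = ∑ i, w i := by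
  simp only [MA1_apply]
  rw [Finset.sum_comm]
  simp only [Finset.sum_ite_eq', Finset.mem_univ, if_true]
  exact Equiv.sum_comp x w

/-- the MA1 chain is reversible with respect to the Hendricks distribution
`π(x) ∝ ∏_i w_{x_i}^{n-i}`, and hence `π` is a stationary distribution of `M`. -/
theorem MA1_reversible (n : ℕ) (hn : 2 ≤ n) (w : Fin n → ℝ)
    (hsum : ∑ i : Fin n, w i = 1) :
    (∀ x y : Equiv.Perm (Fin n),
      ((∑ z : Equiv.Perm (Fin n), wProd n w z)⁻¹ * wProd n w x) *
          MA1 n (by omega) w x y =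
        ((∑ z : Equiv.Perm (Fin n), wProd n w z)⁻¹ * wProd n w y) *
          MA1 n (by omega) w y x) ∧
    (∀ y : Equiv.Perm (Fin n),
      ∑ x : Equiv.Perm (Fin n),
          ((∑ z : Equiv.Perm (Fin n), wProd n w z)⁻¹ * wProd n w x) *
            MA1 n (by omega) w x y =
        (∑ z : Equiv.Perm (Fin n), wProd n w z)⁻¹ * wProd n w y) := by
  refine ⟨fun x y => by rw [mul_assoc, mul_assoc, wProd_mul_MA1_symm], fun y => ?_⟩
  simp only [mul_assoc, wProd_mul_MA1_symm n _ w _ y]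
  rw [← Finset.mul_sum, ← Finset.mul_sum, sum_MA1_row, hsum, mul_one]
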